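/- arXiv:2407.17362 — 10 statements merged into one kernel-verified Lean document; each statement's English description precedes it below -/
import Mathlib

section
/- Let R be a commutative ring and f : R. The map sending a quasi-compact open subset U of the prime spectrum Spec R with U ⊆ D(f) to its preimage under the continuous map Spec(R_f) → Spec R induced by the canonical homomorphism R → R_f is an order isomorphism between the poset of quasi-compact open subsets of Spec R contained in the basic open D(f) and the poset of quasi-compact open subsets of Spec(R_f). -/
open TopologicalSpace

theorem zariski_lattice_away_iso_downset {R : Type*} [CommRing R] (f : R) :
    ∃ e : {U : Opens (PrimeSpectrum R) //
            IsCompact (U : Set (PrimeSpectrum R)) ∧ U ≤ PrimeSpectrum.basicOpen f} ≃o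
          {V : Opens (PrimeSpectrum (Localization.Away f)) //
            IsCompact (V : Set (PrimeSpectrum (Localization.Away f)))},
      ∀ U, ((e U).1 : Set (PrimeSpectrum (Localization.Away f))) =
        (PrimeSpectrum.comap (algebraMap R (Localization.Away f))) ⁻¹'
          (U.1 : Set (PrimeSpectrum R)) := by
  set φ := PrimeSpectrum.comap (algebraMap R (Localization.Away f)) with hφ
  have ho : Topology.IsOpenEmbedding φ :=
    PrimeSpectrum.localization_away_isOpenEmbedding (Localization.Away f) f
  have hrange : Set.range φ = (PrimeSpectrum.basicOpen f : Set (PrimeSpectrum R)) :=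
    PrimeSpectrum.localization_away_comap_range (Localization.Away f) f
  refine ⟨{
    toFun := fun U => ⟨⟨φ ⁻¹' U.1, U.1.isOpen.preimage (PrimeSpectrum.continuous_comap _)⟩,
      ho.isInducing.isCompact_preimage' U.2.1 (by rw [hrange]; exact U.2.2)⟩
    invFun := fun V => ⟨⟨φ '' V.1, ho.isOpenMap _ V.1.isOpen⟩,
      V.2.image (PrimeSpectrum.continuous_comap _),
      by rw [← SetLike.coe_subset_coe, ← hrange]; exact Set.image_subset_range _ _⟩
    left_inv := fun U => by
      ext1; ext1
      simp only [Opens.coe_mk]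
      rw [Set.image_preimage_eq_inter_range, hrange, Set.inter_eq_left]
      exact U.2.2
    right_inv := fun V => by
      ext1; ext1
      simp only [Opens.coe_mk]
      exact Set.preimage_image_eq _ ho.injective
    map_rel_iff' := by
      intro U U'
      simp only [Equiv.coe_fn_mk, ← Subtype.coe_le_coe, ← SetLike.coe_subset_coe, Opens.coe_mk]
      constructor
      · intro h
        have := Set.image_mono (f := φ) h
        rwa [Set.image_preimage_eq_inter_range, Set.image_preimage_eq_inter_range, hrange,
          Set.inter_eq_left.2 U.2.2, Set.inter_eq_left.2 U'.2.2] at this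
      · exact fun h => Set.preimage_mono h }, fun U => rfl⟩
end

section
/- Let R be a commutative ring and f₁, …, fₙ : R elements generating the unit ideal. Suppose that for each i we are given a quasi-compact open subset Uᵢ of Spec R with Uᵢ ⊆ D(fᵢ), and that these are compatible in the sense that Uᵢ ∩ D(fⱼ) = Uⱼ ∩ D(fᵢ) for all i, j. Then there exists a unique quasi-compact open subset U of Spec R such that U ∩ D(fᵢ) = Uᵢ for all i (namely U = U₁ ∪ ⋯ ∪ Uₙ). -/
/-!
STATEMENT 1: Gluing quasi-compact opens along a basic open cover of `Spec R`.
If `f₁, …, fₙ` generate the unit ideal and `Uᵢ` are quasi-compact opens with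
`Uᵢ ⊆ D(fᵢ)` satisfying `Uᵢ ∩ D(fⱼ) = Uⱼ ∩ D(fᵢ)`, then there is a unique
quasi-compact open `U` with `U ∩ D(fᵢ) = Uᵢ` for all `i`, namely `U = ⋃ᵢ Uᵢ`.
-/

open TopologicalSpace

theorem glue_compact_opens {R : Type*} [CommRing R] {n : ℕ} (f : Fin n → R)
    (hf : Ideal.span (Set.range f) = ⊤)
    (U : Fin n → Opens (PrimeSpectrum R))
    (hUc : ∀ i, IsCompact ((U i : Set (PrimeSpectrum R))))
    (hUle : ∀ i, U i ≤ PrimeSpectrum.basicOpen (f i))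
    (hcompat : ∀ i j, U i ⊓ PrimeSpectrum.basicOpen (f j)
      = U j ⊓ PrimeSpectrum.basicOpen (f i)) :
    (∃! V : Opens (PrimeSpectrum R),
        IsCompact (V : Set (PrimeSpectrum R)) ∧
        ∀ i, V ⊓ PrimeSpectrum.basicOpen (f i) = U i) ∧
      (IsCompact ((⨆ i, U i : Opens (PrimeSpectrum R)) : Set (PrimeSpectrum R)) ∧
        ∀ i, (⨆ j, U j) ⊓ PrimeSpectrum.basicOpen (f i) = U i) := by
  have hcov : (⨆ i, PrimeSpectrum.basicOpen (f i)) = (⊤ : Opens (PrimeSpectrum R)) :=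
    PrimeSpectrum.iSup_basicOpen_eq_top_iff.mpr hf
  have hcomp : IsCompact ((⨆ i, U i : Opens (PrimeSpectrum R)) : Set (PrimeSpectrum R)) := by
    rw [Opens.coe_iSup]
    exact isCompact_iUnion hUc
  have hinter : ∀ i, (⨆ j, U j) ⊓ PrimeSpectrum.basicOpen (f i) = U i := by
    intro i
    apply le_antisymm
    · rw [iSup_inf_eq]
      apply iSup_le
      intro j
      rw [hcompat j i]
      exact inf_le_left
    · exact le_inf (le_iSup U i) (hUle i)
  refine ⟨⟨⨆ i, U i, ⟨hcomp, hinter⟩, ?_⟩, hcomp, hinter⟩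
  rintro V ⟨-, hV⟩
  calc V = V ⊓ ⨆ i, PrimeSpectrum.basicOpen (f i) := by rw [hcov, inf_top_eq]
    _ = ⨆ i, V ⊓ PrimeSpectrum.basicOpen (f i) := inf_iSup_eq _ _
    _ = ⨆ i, U i := by simp_rw [hV]
end

section
/- Let A and R be commutative rings and f₁, …, fₙ : R elements generating the unit ideal. Suppose given, for each i, a ring homomorphism φᵢ : A → R_{fᵢ} such that for all i, j the composites of φᵢ and φⱼ with the canonical R-algebra homomorphisms R_{fᵢ} → R_{fᵢfⱼ} and R_{fⱼ} → R_{fᵢfⱼ} agree. Then there exists a unique ring homomorphism φ : A → R such that for each i the composite of φ with the canonical homomorphism R → R_{fᵢ} equals φᵢ. -/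
/-!
STATEMENT 2: Gluing ring homomorphisms: given `f₁, …, fₙ : R` generating the
unit ideal and homomorphisms `φᵢ : A → R_{fᵢ}` agreeing after further
localization to `R_{fᵢfⱼ}`, there is a unique `φ : A → R` whose composite with
each canonical map `R → R_{fᵢ}` is `φᵢ`.  (The Zariski coverage is subcanonical.)
-/

noncomputable def castAway {R : Type*} [CommRing R] {r r' : R} (h : r = r') :
    Localization.Away r →+* Localization.Away r' := by subst h; exact RingHom.id _

lemma castAway_rfl {R : Type*} [CommRing R] (r : R) :
    castAway (rfl : r = r) = RingHom.id _ := rfl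

lemma castAway_algebraMap {R : Type*} [CommRing R] {r r' : R} (h : r = r') (a : R) :
    castAway h (algebraMap R (Localization.Away r) a) = algebraMap R (Localization.Away r') a := by
  subst h; rfl

lemma awayToAwayRight_self_injective {R : Type*} [CommRing R] (x : R) :
    Function.Injective (IsLocalization.Away.awayToAwayRight (S := Localization.Away x)
      (P := Localization.Away (x * x)) x x) := by
  have hu : IsUnit (algebraMap R (Localization.Away x) (x * x)) := by
    rw [map_mul]
    exact (IsLocalization.Away.algebraMap_isUnit x).mul (IsLocalization.Away.algebraMap_isUnit x)
  set u := IsLocalization.Away.lift (S := Localization.Away (x * x))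
    (g := algebraMap R (Localization.Away x)) (x * x) hu with hudef
  have hcomp : u.comp (IsLocalization.Away.awayToAwayRight (S := Localization.Away x)
      (P := Localization.Away (x * x)) x x) = RingHom.id _ := by
    apply IsLocalization.ringHom_ext (Submonoid.powers x)
    ext a
    simp [hudef, IsLocalization.Away.awayToAwayRight_eq, IsLocalization.Away.lift_eq]
  intro p q hpq
  have hp := RingHom.congr_fun hcomp p
  have hq := RingHom.congr_fun hcomp q
  simp only [RingHom.comp_apply, RingHom.id_apply] at hp hq
  rw [← hp, ← hq, hpq]

lemma castAway_comp_eq_of_compat {R A : Type*} [CommRing R] [CommRing A] {x y : R} (h : y = x)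
    (φ₁ : A →+* Localization.Away x) (φ₂ : A →+* Localization.Away y)
    (hc : (IsLocalization.Away.awayToAwayRight (S := Localization.Away x)
        (P := Localization.Away (x * y)) x y).comp φ₁ =
      (IsLocalization.Away.awayToAwayLeft (S := Localization.Away y)
        (P := Localization.Away (x * y)) y x).comp φ₂) :
    (castAway h).comp φ₂ = φ₁ := by
  subst h
  rw [castAway_rfl, RingHom.id_comp]
  ext a
  apply awayToAwayRight_self_injective
  have := RingHom.congr_fun hc a
  simp only [RingHom.comp_apply] at this
  rw [this]
  rfl

lemma compat_cast {R A : Type*} [CommRing R] [CommRing A] {x' x y' y : R}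
    (h1 : x' = x) (h2 : y' = y)
    (ψ₁ : A →+* Localization.Away x') (ψ₂ : A →+* Localization.Away y')
    (hc : (IsLocalization.Away.awayToAwayRight (S := Localization.Away x')
        (P := Localization.Away (x' * y')) x' y').comp ψ₁ =
      (IsLocalization.Away.awayToAwayLeft (S := Localization.Away y')
        (P := Localization.Away (x' * y')) y' x').comp ψ₂) (a : A) :
    IsLocalization.Away.awayToAwayRight (S := Localization.Away x)
        (P := Localization.Away (x * y)) x y (castAway h1 (ψ₁ a)) =
      IsLocalization.Away.awayToAwayLeft (S := Localization.Away y)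
        (P := Localization.Away (x * y)) y x (castAway h2 (ψ₂ a)) := by
  subst h1; subst h2
  rw [castAway_rfl]
  exact RingHom.congr_fun hc a

theorem glue_ring_homs {R A : Type*} [CommRing R] [CommRing A] {n : ℕ} (f : Fin n → R)
    (hf : Ideal.span (Set.range f) = ⊤)
    (φ : ∀ i, A →+* Localization.Away (f i))
    (hcompat : ∀ i j,
      (IsLocalization.Away.awayToAwayRight (S := Localization.Away (f i))
        (P := Localization.Away (f i * f j)) (f i) (f j)).comp (φ i) =
      (IsLocalization.Away.awayToAwayLeft (S := Localization.Away (f j))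
        (P := Localization.Away (f i * f j)) (f j) (f i)).comp (φ j)) :
    ∃! ψ : A →+* R, ∀ i, (algebraMap R (Localization.Away (f i))).comp ψ = φ i := by
  classical
  choose ch hch using fun x : Set.range f => x.2
  set G : A →+* ∀ x : Set.range f, Localization.Away x.1 :=
    Pi.ringHom (fun x => (castAway (hch x)).comp (φ (ch x))) with hG
  have compat : ∀ (a : A) (x y : Set.range f),
      IsLocalization.Away.awayToAwayRight (S := Localization.Away x.1)
        (P := Localization.Away (x.1 * y.1)) x.1 y.1 (G a x) =
      IsLocalization.Away.awayToAwayLeft (S := Localization.Away y.1)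
        (P := Localization.Away (x.1 * y.1)) y.1 x.1 (G a y) := fun a x y =>
    compat_cast (hch x) (hch y) (φ (ch x)) (φ (ch y)) (hcompat (ch x) (ch y)) a
  have key := fun a : A =>
    Localization.existsUnique_algebraMap_eq_of_span_eq_top (Set.range f) hf (G a) (compat a)
  choose ψ₀ hψ using key
  have hinj := Localization.algebraMap_injective_of_span_eq_top (Set.range f) hf
  have he : ∀ a : A,
      algebraMap R (∀ x : Set.range f, Localization.Away x.1) (ψ₀ a) = G a := fun a =>
    funext fun x => by rw [Pi.algebraMap_apply]; exact (hψ a).1 x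
  let ψ : A →+* R :=
    { toFun := ψ₀
      map_one' := hinj (by rw [he, map_one, map_one])
      map_mul' := fun a b => hinj (by rw [he, map_mul, map_mul, he, he])
      map_zero' := hinj (by rw [he, map_zero, map_zero])
      map_add' := fun a b => hinj (by rw [he, map_add, map_add, he, he]) }
  refine ⟨ψ, fun i => ?_, fun ψ' hψ' => ?_⟩
  · have hx : f i ∈ Set.range f := ⟨i, rfl⟩
    have h2 : (castAway (hch ⟨f i, hx⟩)).comp (φ (ch ⟨f i, hx⟩)) = φ i :=
      castAway_comp_eq_of_compat (hch ⟨f i, hx⟩) (φ i) (φ (ch ⟨f i, hx⟩))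
        (hcompat i (ch ⟨f i, hx⟩))
    ext a
    rw [RingHom.comp_apply]
    have h1 : algebraMap R (Localization.Away (f i)) (ψ a) = G a ⟨f i, hx⟩ :=
      (hψ a).1 ⟨f i, hx⟩
    rw [h1, ← h2]
    rfl
  · ext a
    refine (hψ a).2 (ψ' a) fun x => ?_
    have h3 := RingHom.congr_fun (hψ' (ch x)) a
    simp only [RingHom.comp_apply] at h3
    rw [← castAway_algebraMap (hch x), h3]
    rfl
end

section
/- Let A be a commutative ring and I, J ideals of A. Then the radicals of I and J are equal if and only if for every commutative ring B (in the same universe as A) and every ring homomorphism φ : A → B, the extension of I along φ is the unit ideal exactly when the extension of J along φ is the unit ideal; that is, √I = √J ↔ (∀ B, ∀ φ : A →+* B, (I.map φ = ⊤ ↔ J.map φ = ⊤)). -/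
/-!
STATEMENT 4: Two ideals of a commutative ring `A` have the same radical iff for
every ring `B` (in the same universe) and every homomorphism `φ : A → B`, the
extension of `I` is the unit ideal exactly when the extension of `J` is.
-/

universe u

private lemma map_eq_top_iff_radical {A B : Type u} [CommRing A] [CommRing B]
    (I : Ideal A) (φ : A →+* B) : I.map φ = ⊤ ↔ I.radical.map φ = ⊤ := by
  constructor
  · intro h
    exact top_unique (h ▸ Ideal.map_mono I.le_radical)
  · intro h
    rw [← Ideal.radical_eq_top, eq_top_iff, ← h]
    exact le_trans (Ideal.map_mono le_rfl)
      (Ideal.map_radical_le (f := φ) (I := I))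

private lemma sub_of_forall {A : Type u} [CommRing A] (I J : Ideal A)
    (h : ∀ (B : Type u) [CommRing B], ∀ φ : A →+* B,
        (I.map φ = ⊤ → J.map φ = ⊤)) : I.radical ≤ J.radical := by
  intro x hx
  obtain ⟨n, hn⟩ := hx
  set y : A ⧸ J := Ideal.Quotient.mk J x
  let B := Localization.Away y
  let φ : A →+* B := (algebraMap (A ⧸ J) B).comp (Ideal.Quotient.mk J)
  have hI : I.map φ = ⊤ := by
    apply Ideal.eq_top_of_isUnit_mem _ (Ideal.mem_map_of_mem φ hn)
    have : IsUnit (algebraMap (A ⧸ J) B y) :=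
      IsLocalization.map_units B (⟨y, Submonoid.mem_powers y⟩ : Submonoid.powers y)
    simpa [φ, map_pow] using this.pow n
  have hJ : J.map φ = ⊤ := h B φ hI
  have hbot : J.map φ = ⊥ := by
    rw [eq_bot_iff, Ideal.map_le_iff_le_comap]
    intro j hj
    simp [φ, Ideal.Quotient.eq_zero_iff_mem.mpr hj]
  have h10 : (1 : A ⧸ J) = 0 ∨ ∃ k, y ^ k = 0 := by
    have h1 : (1 : B) = 0 := (Ideal.eq_top_iff_one (⊥ : Ideal B)).mp (hbot.symm.trans hJ)
    have : (algebraMap (A ⧸ J) B) 1 = 0 := by simpa using h1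
    rw [IsLocalization.map_eq_zero_iff (Submonoid.powers y)] at this
    obtain ⟨⟨m, k, hk⟩, hm⟩ := this
    exact Or.inr ⟨k, by simp only at hk; rw [hk]; simpa using hm⟩
  rcases h10 with h1 | ⟨k, hk⟩
  · exact ⟨0, by simpa using Ideal.Quotient.eq_zero_iff_mem.mp (by simp [h1] : Ideal.Quotient.mk J 1 = 0)⟩
  · refine ⟨k, Ideal.Quotient.eq_zero_iff_mem.mp ?_⟩
    rw [map_pow]
    exact hk

theorem radical_eq_iff_map_eq_top {A : Type u} [CommRing A] (I J : Ideal A) :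
    I.radical = J.radical ↔
      ∀ (B : Type u) [CommRing B], ∀ φ : A →+* B,
        (I.map φ = ⊤ ↔ J.map φ = ⊤) := by
  constructor
  · intro h B _ φ
    rw [map_eq_top_iff_radical I φ, map_eq_top_iff_radical J φ, h]
  · intro h
    exact le_antisymm
      (sub_of_forall I J (fun B _ φ => (h B φ).mp))
      (sub_of_forall J I (fun B _ φ => (h B φ).mpr))
end

section
/- Let X be a ringed space (a sheafed space of commutative rings). Then all stalks of the structure sheaf of X are local rings if and only if for every open subset U of X and all sections s, t of the structure sheaf on U, the invertibility open of the zero section is empty and the invertibility open of s + t is contained in the union of the invertibility opens of s and of t; that is, (∀ x, IsLocalRing (stalk of X at x)) ↔ (∀ U, X.basicOpen (0 : O_X(U)) = ⊥ ∧ ∀ s t : O_X(U), X.basicOpen (s + t) ≤ X.basicOpen s ⊔ X.basicOpen t). -/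
open CategoryTheory AlgebraicGeometry Opposite TopologicalSpace

theorem isLocalRing_stalks_iff_basicOpen_support (X : AlgebraicGeometry.RingedSpace) :
    (∀ x : X, IsLocalRing (X.presheaf.stalk x)) ↔
      ∀ U : Opens X,
        X.basicOpen (0 : X.presheaf.obj (op U)) = ⊥ ∧
        ∀ s t : X.presheaf.obj (op U),
          X.basicOpen (s + t) ≤ X.basicOpen s ⊔ X.basicOpen t := by
  constructor
  · intro h U
    constructor
    · ext x
      simp only [Opens.coe_bot, Set.mem_empty_iff_false, iff_false, SetLike.mem_coe]
      rintro ⟨hx, hu⟩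
      rw [map_zero] at hu
      haveI := h x
      exact not_isUnit_zero hu
    · rintro s t x ⟨hx, hu⟩
      rw [map_add] at hu
      rcases (h x).isUnit_or_isUnit_of_isUnit_add hu with h' | h'
      · exact Or.inl ⟨hx, h'⟩
      · exact Or.inr ⟨hx, h'⟩
  · intro h x
    have hnt : Nontrivial (X.presheaf.stalk x) := by
      refine ⟨0, 1, fun e => ?_⟩
      have : x ∈ X.basicOpen (0 : X.presheaf.obj (op ⊤)) := by
        rw [X.mem_basicOpen _ x (Opens.mem_top x), map_zero, e]
        exact isUnit_one
      rw [(h ⊤).1] at this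
      exact this
    refine IsLocalRing.of_isUnit_or_isUnit_of_isUnit_add fun a b hab => ?_
    obtain ⟨U, hxU, s, rfl⟩ := X.presheaf.germ_exist a
    obtain ⟨V, hxV, t, rfl⟩ := X.presheaf.germ_exist b
    -- restrict to W = U ⊓ V
    have hxW : x ∈ U ⊓ V := ⟨hxU, hxV⟩
    set iU : U ⊓ V ⟶ U := homOfLE inf_le_left
    set iV : U ⊓ V ⟶ V := homOfLE inf_le_right
    have hs : X.presheaf.germ U x hxU s
        = X.presheaf.germ (U ⊓ V) x hxW (X.presheaf.map iU.op s) :=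
      (X.presheaf.germ_res_apply iU x hxW s).symm
    have ht : X.presheaf.germ V x hxV t
        = X.presheaf.germ (U ⊓ V) x hxW (X.presheaf.map iV.op t) :=
      (X.presheaf.germ_res_apply iV x hxW t).symm
    rw [hs, ht, ← map_add] at hab
    have : x ∈ X.basicOpen (X.presheaf.map iU.op s + X.presheaf.map iV.op t) := by
      rw [X.mem_basicOpen _ x hxW]
      exact hab
    rcases (h (U ⊓ V)).2 _ _ this with h' | h'
    · left
      rw [hs, ← X.mem_basicOpen _ x hxW]
      exact h'
    · right
      rw [ht, ← X.mem_basicOpen _ x hxW]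
      exact h'
end

section
/- Let k be a field and R = k[x, y] the polynomial ring in two variables. Let U = D(x) ∪ D(y) be the open subset of the scheme Spec R that is the union of the basic open sets of x and y (the complement of the origin). Then the restriction homomorphism from the ring of global sections Γ(Spec R, ⊤) to the ring of sections Γ(Spec R, U) over U is an isomorphism of rings. -/
/-!
STATEMENT 8: For a field `k` and `R = k[x,y]`, the restriction map from global
sections of `Spec R` to sections over `U = D(x) ∪ D(y)` (the complement of the
origin) is an isomorphism of rings.
-/

open AlgebraicGeometry CategoryTheory Opposite TopologicalSpace

lemma aux_exists_preimage {R : Type*} [CommRing R] [IsDomain R] [DecompositionMonoid R] {x y : R}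
    (hx : x ≠ 0) (hy : y ≠ 0) (hrp : IsRelPrime x y)
    {Ax Ay Axy : Type*} [CommRing Ax] [CommRing Ay] [CommRing Axy]
    [Algebra R Ax] [Algebra R Ay] [Algebra R Axy]
    [IsLocalization.Away x Ax] [IsLocalization.Away y Ay]
    [IsLocalization.Away (x * y) Axy]
    (fx : Ax →+* Axy) (fy : Ay →+* Axy)
    (hfx : fx.comp (algebraMap R Ax) = algebraMap R Axy)
    (hfy : fy.comp (algebraMap R Ay) = algebraMap R Axy)
    (sx : Ax) (sy : Ay) (h : fx sx = fy sy) :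
    ∃ r : R, algebraMap R Ax r = sx ∧ algebraMap R Ay r = sy := by
  obtain ⟨⟨a, tx⟩, ha⟩ := IsLocalization.surj (Submonoid.powers x) sx
  obtain ⟨n, hn⟩ : ∃ n : ℕ, x ^ n = (tx : R) := tx.2
  obtain ⟨⟨b, ty⟩, hb⟩ := IsLocalization.surj (Submonoid.powers y) sy
  obtain ⟨m, hm⟩ : ∃ m : ℕ, y ^ m = (ty : R) := ty.2
  rw [← hn] at ha
  rw [← hm] at hb
  have hinj : Function.Injective (algebraMap R Axy) :=
    IsLocalization.injective Axy
      (powers_le_nonZeroDivisors_of_noZeroDivisors (mul_ne_zero hx hy))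
  have e1 : fx sx * algebraMap R Axy (x ^ n) = algebraMap R Axy a := by
    have := congrArg fx ha
    rw [map_mul] at this
    rw [← hfx]
    exact this
  have e2 : fy sy * algebraMap R Axy (y ^ m) = algebraMap R Axy b := by
    have := congrArg fy hb
    rw [map_mul] at this
    rw [← hfy]
    exact this
  have key : a * y ^ m = b * x ^ n := by
    apply hinj
    rw [map_mul, map_mul, ← e1, ← e2, h]
    ring
  obtain ⟨c, rfl⟩ : x ^ n ∣ a :=
    (hrp.pow).dvd_of_dvd_mul_right ⟨b, by rw [key]; ring⟩
  have hbc : b = c * y ^ m := by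
    have h2 : x ^ n * (c * y ^ m) = x ^ n * b := by linear_combination key
    exact (mul_left_cancel₀ (pow_ne_zero n hx) h2).symm
  refine ⟨c, ?_, ?_⟩
  · have hu : IsUnit (algebraMap R Ax (x ^ n)) :=
      IsLocalization.map_units Ax (⟨x ^ n, n, rfl⟩ : Submonoid.powers x)
    have heq : algebraMap R Ax c * algebraMap R Ax (x ^ n) = sx * algebraMap R Ax (x ^ n) := by
      rw [← map_mul, mul_comm c]
      exact ha.symm
    exact hu.mul_right_cancel heq
  · have hu : IsUnit (algebraMap R Ay (y ^ m)) :=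
      IsLocalization.map_units Ay (⟨y ^ m, m, rfl⟩ : Submonoid.powers y)
    have heq : algebraMap R Ay c * algebraMap R Ay (y ^ m) = sy * algebraMap R Ay (y ^ m) := by
      rw [← map_mul, ← hbc]
      exact hb.symm
    exact hu.mul_right_cancel heq

lemma aux_main {R : Type*} [CommRing R] [IsDomain R] [DecompositionMonoid R]
    {x y : R} (hx : x ≠ 0) (hy : y ≠ 0) (hrp : IsRelPrime x y) :
    IsIso ((Spec.structureSheaf R).1.map
      (homOfLE (le_top : (PrimeSpectrum.basicOpen x ⊔ PrimeSpectrum.basicOpen y :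
        Opens (PrimeSpectrum R)) ≤ ⊤)).op) := by
  set Dx := PrimeSpectrum.basicOpen x with hDx
  set Dy := PrimeSpectrum.basicOpen y with hDy
  set U : Opens (PrimeSpectrum.Top R) := Dx ⊔ Dy with hU
  letI : Algebra R ((Spec.structureSheaf R).1.obj (op Dx)) := StructureSheaf.openAlgebra R _
  letI : Algebra R ((Spec.structureSheaf R).1.obj (op Dy)) := StructureSheaf.openAlgebra R _
  haveI : IsLocalization.Away x ((Spec.structureSheaf R).1.obj (op Dx)) :=
    StructureSheaf.IsLocalization.to_basicOpen R x
  haveI : IsLocalization.Away y ((Spec.structureSheaf R).1.obj (op Dy)) :=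
    StructureSheaf.IsLocalization.to_basicOpen R y
  rw [ConcreteCategory.isIso_iff_bijective]
  have htop : Function.Bijective (StructureSheaf.toOpen R (⊤ : Opens (PrimeSpectrum.Top R))) :=
    by exact StructureSheaf.algebraMap_obj_top_bijective
  have hcomp : ⇑((Spec.structureSheaf R).1.map
        (homOfLE (le_top : U ≤ ⊤)).op) ∘ ⇑(StructureSheaf.toOpen R ⊤)
      = ⇑(StructureSheaf.toOpen R U) := rfl
  suffices hbij : Function.Bijective (StructureSheaf.toOpen R U) by
    rw [← hcomp] at hbij
    exact (Function.Bijective.of_comp_iff _ htop).mp hbij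
  constructor
  · -- injectivity of toOpen R U
    have hinjx : Function.Injective (StructureSheaf.toOpen R Dx) :=
      IsLocalization.injective ((Spec.structureSheaf R).1.obj (op Dx))
        (powers_le_nonZeroDivisors_of_noZeroDivisors hx)
    have : ⇑((Spec.structureSheaf R).1.map (homOfLE (le_sup_left : Dx ≤ U)).op)
        ∘ ⇑(StructureSheaf.toOpen R U) = ⇑(StructureSheaf.toOpen R Dx) := rfl
    exact Function.Injective.of_comp (this ▸ hinjx)
  · -- surjectivity
    intro s
    set V := PrimeSpectrum.basicOpen (x * y) with hV
    letI : Algebra R ((Spec.structureSheaf R).1.obj (op V)) := StructureSheaf.openAlgebra R _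
    haveI : IsLocalization.Away (x * y) ((Spec.structureSheaf R).1.obj (op V)) :=
      StructureSheaf.IsLocalization.to_basicOpen R (x * y)
    have hVx : V ≤ Dx := by
      rw [hV, hDx, PrimeSpectrum.basicOpen_mul]; exact inf_le_left
    have hVy : V ≤ Dy := by
      rw [hV, hDy, PrimeSpectrum.basicOpen_mul]; exact inf_le_right
    let ix : Dx ⟶ U := homOfLE le_sup_left
    let iy : Dy ⟶ U := homOfLE le_sup_right
    set sx := (Spec.structureSheaf R).1.map ix.op s with hsx
    set sy := (Spec.structureSheaf R).1.map iy.op s with hsy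
    let fx : ((Spec.structureSheaf R).1.obj (op Dx)) →+* ((Spec.structureSheaf R).1.obj (op V)) :=
      ((Spec.structureSheaf R).1.map (homOfLE hVx).op).hom
    let fy : ((Spec.structureSheaf R).1.obj (op Dy)) →+* ((Spec.structureSheaf R).1.obj (op V)) :=
      ((Spec.structureSheaf R).1.map (homOfLE hVy).op).hom
    have hcompat : fx sx = fy sy := by
      show ((Spec.structureSheaf R).1.map ix.op ≫
        (Spec.structureSheaf R).1.map (homOfLE hVx).op) s =
        ((Spec.structureSheaf R).1.map iy.op ≫
        (Spec.structureSheaf R).1.map (homOfLE hVy).op) s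
      erw [← Functor.map_comp]
    obtain ⟨r, hrx, hry⟩ := aux_exists_preimage hx hy hrp fx fy rfl rfl sx sy hcompat
    refine ⟨r, ?_⟩
    apply TopCat.Sheaf.eq_of_locally_eq₂ (Spec.structureSheaf R) ix iy le_rfl
    · show ((StructureSheaf.toOpen R U) ≫ (Spec.structureSheaf R).1.map ix.op) r = _
      erw [StructureSheaf.toOpen_res]
      exact hrx
    · show ((StructureSheaf.toOpen R U) ≫ (Spec.structureSheaf R).1.map iy.op) r = _
      erw [StructureSheaf.toOpen_res]
      exact hry

lemma prime_X0 (k : Type*) [Field k] :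
    Prime (MvPolynomial.X 0 : MvPolynomial (Fin 2) k) := by
  rw [← MulEquiv.prime_iff (MvPolynomial.finSuccEquiv k 1).toMulEquiv]
  rw [show (MvPolynomial.finSuccEquiv k 1).toMulEquiv (MvPolynomial.X 0) = Polynomial.X from
    MvPolynomial.finSuccEquiv_X_zero]
  exact Polynomial.prime_X

theorem sections_plane_minus_origin (k : Type*) [Field k] :
    IsIso ((Spec (CommRingCat.of (MvPolynomial (Fin 2) k))).presheaf.map
      (homOfLE (le_top :
        (PrimeSpectrum.basicOpen (MvPolynomial.X 0) ⊔
          PrimeSpectrum.basicOpen (MvPolynomial.X 1) :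
            Opens (PrimeSpectrum (MvPolynomial (Fin 2) k))) ≤ ⊤)).op) := by
  have hdvd : ¬ (MvPolynomial.X 0 : MvPolynomial (Fin 2) k) ∣ MvPolynomial.X 1 := by
    rintro ⟨c, hc⟩
    have := congrArg (MvPolynomial.eval ![0, 1]) hc
    simp at this
  have hrp : IsRelPrime (MvPolynomial.X 0 : MvPolynomial (Fin 2) k) (MvPolynomial.X 1) :=
    (prime_X0 k).irreducible.isRelPrime_iff_not_dvd.mpr hdvd
  exact aux_main (R := MvPolynomial (Fin 2) k) (MvPolynomial.X_ne_zero 0) (MvPolynomial.X_ne_zero 1) hrp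
end

section
/- Let k be a field and R = k[x, y] the polynomial ring in two variables. Let U = D(x) ∪ D(y) be the open subset of the scheme Spec R that is the union of the basic open sets of x and y. Then the open subscheme (Spec R)∣_U (the plane minus the origin) is not an affine scheme. -/
/-!
STATEMENT 9: For a field `k` and `R = k[x,y]`, the open subscheme of `Spec R`
on `U = D(x) ∪ D(y)` (the plane minus the origin) is not affine.
-/

open AlgebraicGeometry CategoryTheory TopologicalSpace

namespace PuncturedPlane
open MvPolynomial

variable (k : Type*) [Field k]

lemma prime_X0 : Prime (X 0 : MvPolynomial (Fin 2) k) := by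
  rw [← MulEquiv.prime_iff (finSuccEquiv k 1).toMulEquiv]
  simpa [finSuccEquiv_X_zero] using Polynomial.prime_X (R := MvPolynomial (Fin 1) k)

lemma prime_X1 : Prime (X 1 : MvPolynomial (Fin 2) k) := by
  rw [← MulEquiv.prime_iff (renameEquiv k (Equiv.swap (0 : Fin 2) 1)).toMulEquiv]
  simpa using prime_X0 k

lemma not_dvd : ¬ (X 0 : MvPolynomial (Fin 2) k) ∣ X 1 := by
  rintro ⟨c, hc⟩
  have := congrArg (eval (![0, 1] : Fin 2 → k)) hc
  simp at this

end PuncturedPlane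

namespace PuncturedPlane
open MvPolynomial
variable (k : Type*) [Field k]

lemma exists_common {f g : MvPolynomial (Fin 2) k} {n m : ℕ}
    (h : f * X 1 ^ m = g * X 0 ^ n) :
    ∃ r, f = X 0 ^ n * r ∧ g = X 1 ^ m * r := by
  have hx := prime_X0 k
  have hdvd : (X 0 : MvPolynomial (Fin 2) k) ^ n ∣ f := by
    exact hx.pow_dvd_of_dvd_mul_right (b := X 1 ^ m) n (fun hd => not_dvd k (hx.dvd_of_dvd_pow hd)) ⟨g, by linear_combination h⟩
  obtain ⟨r, hr⟩ := hdvd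
  refine ⟨r, hr, ?_⟩
  have hxn : (X 0 : MvPolynomial (Fin 2) k) ^ n ≠ 0 :=
    pow_ne_zero _ (X_ne_zero _)
  apply mul_left_cancel₀ hxn
  rw [hr] at h
  linear_combination -h

end PuncturedPlane

namespace PuncturedPlane
open MvPolynomial Opposite AlgebraicGeometry.StructureSheaf

lemma toOpen_basicOpen_injective {A : Type*} [CommRing A] [IsDomain A] {h : A} (hh : h ≠ 0) :
    Function.Injective (StructureSheaf.toOpen A (PrimeSpectrum.basicOpen h)) := by
  have h1 : Function.Injective (algebraMap A (Localization.Away h)) :=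
    IsLocalization.injective _ (powers_le_nonZeroDivisors_of_noZeroDivisors hh)
  letI : Algebra A ((Spec.structureSheaf A).1.obj (op (PrimeSpectrum.basicOpen h))) :=
    StructureSheaf.openAlgebra A (op (PrimeSpectrum.basicOpen h))
  haveI : IsLocalization.Away h ((Spec.structureSheaf A).1.obj (op (PrimeSpectrum.basicOpen h))) :=
    StructureSheaf.IsLocalization.to_basicOpen A h
  exact IsLocalization.injective (M := Submonoid.powers h)
    (S := (Spec.structureSheaf A).1.obj (op (PrimeSpectrum.basicOpen h)))
    (powers_le_nonZeroDivisors_of_noZeroDivisors hh)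

variable (k : Type*) [Field k]

lemma toOpen_bijective :
    Function.Bijective (StructureSheaf.toOpen (MvPolynomial (Fin 2) k)
      (PrimeSpectrum.basicOpen (X 0) ⊔ PrimeSpectrum.basicOpen (X 1))) := by
  classical
  set R := MvPolynomial (Fin 2) k with hR
  have hx0 : (X 0 : R) ≠ 0 := X_ne_zero _
  have hy0 : (X 1 : R) ≠ 0 := X_ne_zero _
  set Dx : Opens (PrimeSpectrum.Top R) := PrimeSpectrum.basicOpen (X 0 : R) with hDx
  set Dy : Opens (PrimeSpectrum.Top R) := PrimeSpectrum.basicOpen (X 1 : R) with hDy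
  set U : Opens (PrimeSpectrum.Top R) := Dx ⊔ Dy with hU
  set W : Opens (PrimeSpectrum.Top R) := PrimeSpectrum.basicOpen ((X 0 : R) * X 1) with hW
  have hWx : W ≤ Dx := by rw [hW, PrimeSpectrum.basicOpen_mul]; exact inf_le_left
  have hWy : W ≤ Dy := by rw [hW, PrimeSpectrum.basicOpen_mul]; exact inf_le_right
  have hWU : W ≤ U := le_trans hWx le_sup_left
  have hres : ∀ (V1 V2 : Opens (PrimeSpectrum.Top R)) (hle : V1 ≤ V2) (r : R),
      (Spec.structureSheaf R).1.map (homOfLE hle).op (StructureSheaf.toOpen R V2 r)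
        = StructureSheaf.toOpen R V1 r := by
    intro V1 V2 hle r
    exact ConcreteCategory.congr_hom (StructureSheaf.toOpen_res R (op V1) (op V2) (homOfLE hle).op) r
  letI : Algebra R ((Spec.structureSheaf R).1.obj (op Dx)) := StructureSheaf.openAlgebra R (op Dx)
  letI : Algebra R ((Spec.structureSheaf R).1.obj (op Dy)) := StructureSheaf.openAlgebra R (op Dy)
  haveI hlx : IsLocalization.Away (X 0 : R) ((Spec.structureSheaf R).1.obj (op Dx)) :=
    StructureSheaf.IsLocalization.to_basicOpen R (X 0)
  haveI hly : IsLocalization.Away (X 1 : R) ((Spec.structureSheaf R).1.obj (op Dy)) :=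
    StructureSheaf.IsLocalization.to_basicOpen R (X 1)
  constructor
  · intro a b hab
    have h3 := congrArg ((Spec.structureSheaf R).1.map (homOfLE (le_sup_left : Dx ≤ U)).op) hab
    erw [hres Dx U le_sup_left, hres Dx U le_sup_left] at h3
    exact toOpen_basicOpen_injective hx0 h3
  · intro s
    obtain ⟨⟨f, d⟩, hfd⟩ := ((isLocalization_iff _ _).mp hlx).2.1
      ((Spec.structureSheaf R).1.map (homOfLE (le_sup_left : Dx ≤ U)).op s)
    obtain ⟨n, hn⟩ := d.2
    rw [← hn] at hfd
    have hsx : (Spec.structureSheaf R).1.map (homOfLE (le_sup_left : Dx ≤ U)).op s *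
        StructureSheaf.toOpen R Dx ((X 0 : R) ^ n) = StructureSheaf.toOpen R Dx f := by
      exact hfd
    obtain ⟨⟨g, e⟩, hge⟩ := ((isLocalization_iff _ _).mp hly).2.1
      ((Spec.structureSheaf R).1.map (homOfLE (le_sup_right : Dy ≤ U)).op s)
    obtain ⟨m, hm⟩ := e.2
    rw [← hm] at hge
    have hsy : (Spec.structureSheaf R).1.map (homOfLE (le_sup_right : Dy ≤ U)).op s *
        StructureSheaf.toOpen R Dy ((X 1 : R) ^ m) = StructureSheaf.toOpen R Dy g := by
      exact hge
    have hcompx : (Spec.structureSheaf R).1.map (homOfLE hWx).op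
        ((Spec.structureSheaf R).1.map (homOfLE (le_sup_left : Dx ≤ U)).op s)
        = (Spec.structureSheaf R).1.map (homOfLE hWU).op s := by
      have hc : (Spec.structureSheaf R).1.map (homOfLE (le_sup_left : Dx ≤ U)).op ≫
          (Spec.structureSheaf R).1.map (homOfLE hWx).op
          = (Spec.structureSheaf R).1.map (homOfLE hWU).op := by
        rw [← Functor.map_comp, ← op_comp, homOfLE_comp]
      exact ConcreteCategory.congr_hom hc s
    have hcompy : (Spec.structureSheaf R).1.map (homOfLE hWy).op
        ((Spec.structureSheaf R).1.map (homOfLE (le_sup_right : Dy ≤ U)).op s)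
        = (Spec.structureSheaf R).1.map (homOfLE hWU).op s := by
      have hc : (Spec.structureSheaf R).1.map (homOfLE (le_sup_right : Dy ≤ U)).op ≫
          (Spec.structureSheaf R).1.map (homOfLE hWy).op
          = (Spec.structureSheaf R).1.map (homOfLE hWU).op := by
        rw [← Functor.map_comp, ← op_comp, homOfLE_comp]
      exact ConcreteCategory.congr_hom hc s
    have e1 : (Spec.structureSheaf R).1.map (homOfLE hWU).op s *
        StructureSheaf.toOpen R W ((X 0 : R) ^ n) = StructureSheaf.toOpen R W f := by
      have h5 := congrArg ((Spec.structureSheaf R).1.map (homOfLE hWx).op) hsx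
      rw [map_mul, hcompx, hres W Dx hWx, hres W Dx hWx] at h5
      exact h5
    have e2 : (Spec.structureSheaf R).1.map (homOfLE hWU).op s *
        StructureSheaf.toOpen R W ((X 1 : R) ^ m) = StructureSheaf.toOpen R W g := by
      have h5 := congrArg ((Spec.structureSheaf R).1.map (homOfLE hWy).op) hsy
      rw [map_mul, hcompy, hres W Dy hWy, hres W Dy hWy] at h5
      exact h5
    have e3 : StructureSheaf.toOpen R W (f * (X 1 : R) ^ m)
        = StructureSheaf.toOpen R W (g * (X 0 : R) ^ n) := by
      rw [map_mul, map_mul, ← e1, ← e2]; ring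
    have hfg : f * (X 1 : R) ^ m = g * (X 0 : R) ^ n :=
      toOpen_basicOpen_injective (mul_ne_zero hx0 hy0) e3
    obtain ⟨r, hfr, hgr⟩ := exists_common k hfg
    refine ⟨r, ?_⟩
    apply (Spec.structureSheaf R).eq_of_locally_eq₂
      (homOfLE (le_sup_left : Dx ≤ U)) (homOfLE (le_sup_right : Dy ≤ U)) le_rfl
    · rw [hres Dx U le_sup_left]
      have hu : IsUnit (StructureSheaf.toOpen R Dx ((X 0 : R) ^ n)) := by
        rw [map_pow]
        exact (((isLocalization_iff _ _).mp hlx).1 ⟨X 0, Submonoid.mem_powers _⟩).pow n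
      apply hu.mul_left_cancel
      rw [← map_mul, ← hfr, mul_comm]
      exact hsx.symm
    · rw [hres Dy U le_sup_right]
      have hu : IsUnit (StructureSheaf.toOpen R Dy ((X 1 : R) ^ m)) := by
        rw [map_pow]
        exact (((isLocalization_iff _ _).mp hly).1 ⟨X 1, Submonoid.mem_powers _⟩).pow m
      apply hu.mul_left_cancel
      rw [← map_mul, ← hgr, mul_comm]
      exact hsy.symm

end PuncturedPlane

theorem plane_minus_origin_not_affine (k : Type*) [Field k] :
    ¬ IsAffine (Scheme.Opens.toScheme
      (X := Spec (CommRingCat.of (MvPolynomial (Fin 2) k)))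
      (PrimeSpectrum.basicOpen (MvPolynomial.X 0) ⊔
        PrimeSpectrum.basicOpen (MvPolynomial.X 1))) := by
  intro hAff
  set R' := CommRingCat.of (MvPolynomial (Fin 2) k) with hR'
  set U : (Spec R').Opens := PrimeSpectrum.basicOpen (MvPolynomial.X 0) ⊔
      PrimeSpectrum.basicOpen (MvPolynomial.X 1) with hU
  have hbij := PuncturedPlane.toOpen_bijective k
  have h1 : IsIso (StructureSheaf.toOpen (MvPolynomial (Fin 2) k) (U.ι ''ᵁ ⊤)) := by
    rw [Scheme.Opens.ι_image_top]
    haveI : IsIso ((forget CommRingCat).map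
        (StructureSheaf.toOpen (MvPolynomial (Fin 2) k) U)) :=
      (CategoryTheory.isIso_iff_bijective _).mpr hbij
    exact isIso_of_reflects_iso _ (forget CommRingCat)
  have h2 : IsIso U.ι.appTop := by
    rw [Scheme.Opens.ι_appTop]
    have h3 : StructureSheaf.toOpen (MvPolynomial (Fin 2) k) ⊤ ≫
        (Spec R').presheaf.map (homOfLE (le_top : U.ι ''ᵁ ⊤ ≤ ⊤)).op
        = StructureSheaf.toOpen (MvPolynomial (Fin 2) k) (U.ι ''ᵁ ⊤) :=
      StructureSheaf.toOpen_res _ _ _ _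
    haveI htop : IsIso (StructureSheaf.toOpen (MvPolynomial (Fin 2) k) ⊤) := by
      have hh : (Scheme.ΓSpecIso R').inv = StructureSheaf.toOpen (MvPolynomial (Fin 2) k) ⊤ :=
        Scheme.ΓSpecIso_inv R'
      rw [← hh]
      exact Iso.isIso_inv _
    rw [← h3] at h1
    exact @IsIso.of_isIso_comp_left _ _ _ _ _ _ _ htop h1
  haveI := h2
  have h4 : IsIso U.ι := by
    have h5 := AlgebraicGeometry.Scheme.isoSpec_hom_naturality U.ι
    have h6 : U.ι = U.toScheme.isoSpec.hom ≫ Spec.map U.ι.appTop ≫ (Spec R').isoSpec.inv := by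
      rw [← Category.assoc, h5, Category.assoc, Iso.hom_inv_id, Category.comp_id]
    rw [h6]
    infer_instance
  haveI := h4
  have hsurj : Function.Surjective U.ι.base := fun p => by
    obtain ⟨q, hq⟩ := (Scheme.homeoOfIso (asIso U.ι)).surjective p
    exact ⟨q, hq⟩
  let φ : MvPolynomial (Fin 2) k →+* k :=
    (MvPolynomial.aeval (fun _ : Fin 2 => (0 : k))).toRingHom
  let p : PrimeSpectrum (MvPolynomial (Fin 2) k) := ⟨RingHom.ker φ, RingHom.ker_isPrime φ⟩
  obtain ⟨q, hq⟩ := hsurj p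
  have hpU : p ∈ U := by
    have hmem : p ∈ Set.range U.ι.base := ⟨q, hq⟩
    rwa [Scheme.Opens.range_ι] at hmem
  have hker : ∀ i : Fin 2, MvPolynomial.X i ∈ RingHom.ker φ := fun i => by
    simp [φ, RingHom.mem_ker]
  have hpU' : p ∈ PrimeSpectrum.basicOpen (MvPolynomial.X (0 : Fin 2)) ∨
      p ∈ PrimeSpectrum.basicOpen (MvPolynomial.X (1 : Fin 2)) := by
    have := hpU
    rw [hU] at this
    exact Opens.mem_sup.mp this
  rcases hpU' with h | h
  · exact (PrimeSpectrum.mem_basicOpen _ _).mp h (hker 0)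
  · exact (PrimeSpectrum.mem_basicOpen _ _).mp h (hker 1)
end

section
/- Let X be a scheme, R a commutative ring, and f₁, …, fₙ : R elements generating the unit ideal. Suppose given, for each i, a morphism of schemes gᵢ : Spec(R_{fᵢ}) ⟶ X such that for all i, j the composites of gᵢ and gⱼ with the morphisms Spec(R_{fᵢfⱼ}) ⟶ Spec(R_{fᵢ}) and Spec(R_{fᵢfⱼ}) ⟶ Spec(R_{fⱼ}) induced by the canonical localization homomorphisms agree. Then there exists a unique morphism of schemes g : Spec R ⟶ X such that for each i the composite of the morphism Spec(R_{fᵢ}) ⟶ Spec R induced by R → R_{fᵢ} with g equals gᵢ. (The functor of points of a scheme is a Zariski sheaf.) -/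
/-!
STATEMENT 10: The functor of points of a scheme is a Zariski sheaf: given
`f₁, …, fₙ : R` generating the unit ideal and morphisms
`gᵢ : Spec (R_{fᵢ}) ⟶ X` that agree after restriction to `Spec (R_{fᵢfⱼ})`,
there is a unique `g : Spec R ⟶ X` restricting to the `gᵢ`.
-/

open AlgebraicGeometry CategoryTheory

universe u

open TensorProduct in
theorem pullback_compat (X : Scheme.{u}) {R : Type u} [CommRing R] (a b : R)
    (gi : Spec (CommRingCat.of (Localization.Away a)) ⟶ X)
    (gj : Spec (CommRingCat.of (Localization.Away b)) ⟶ X)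
    (h : Spec.map (CommRingCat.ofHom
        (IsLocalization.Away.awayToAwayRight (S := Localization.Away a)
          (P := Localization.Away (a * b)) a b)) ≫ gi =
      Spec.map (CommRingCat.ofHom
        (IsLocalization.Away.awayToAwayLeft (S := Localization.Away b)
          (P := Localization.Away (a * b)) b a)) ≫ gj) :
    Limits.pullback.fst (Spec.map (CommRingCat.ofHom (algebraMap R (Localization.Away a))))
        (Spec.map (CommRingCat.ofHom (algebraMap R (Localization.Away b)))) ≫ gi =
      Limits.pullback.snd _ _ ≫ gj := by
  set T := Localization.Away a with hT
  set A := Localization.Away b with hA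
  set B := Localization.Away (a * b) with hB
  let r : T →ₐ[R] B := { IsLocalization.Away.awayToAwayRight (S := T) (P := B) a b with
    commutes' := IsLocalization.Away.awayToAwayRight_eq (S := T) (P := B) a b }
  let l : A →ₐ[R] B := { IsLocalization.Away.awayToAwayLeft (S := A) (P := B) b a with
    commutes' := IsLocalization.Away.awayToAwayLeft_eq (S := A) (P := B) b a }
  let φ : T ⊗[R] A →ₐ[R] B := Algebra.TensorProduct.lift r l (fun _ _ => Commute.all _ _)
  have hu : IsUnit (algebraMap R (T ⊗[R] A) (a * b)) := by
    rw [map_mul]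
    refine IsUnit.mul ?_ ?_
    · rw [Algebra.TensorProduct.algebraMap_apply]
      exact (IsLocalization.Away.algebraMap_isUnit (S := T) a).map
        Algebra.TensorProduct.includeLeftRingHom
    · rw [Algebra.TensorProduct.algebraMap_apply']
      exact (IsLocalization.Away.algebraMap_isUnit (S := A) b).map
        (Algebra.TensorProduct.includeRight (R := R) (A := T) (B := A)).toRingHom
  let ψ : B →+* T ⊗[R] A := IsLocalization.Away.lift (S := B) (a * b) hu
  have hψalg : ∀ x : R, ψ (algebraMap R B x) = algebraMap R (T ⊗[R] A) x := fun x =>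
    IsLocalization.Away.lift_eq (a * b) hu x
  have hφalg : ∀ x : R, φ.toRingHom (algebraMap R (T ⊗[R] A) x) = algebraMap R B x :=
    fun x => φ.commutes x
  have hφψ : (φ.toRingHom.comp ψ) = RingHom.id B := by
    apply IsLocalization.ringHom_ext (Submonoid.powers (a * b))
    ext x
    simp only [RingHom.comp_apply, RingHom.id_apply, hψalg, hφalg]
  have hψφL : (ψ.comp φ.toRingHom).comp Algebra.TensorProduct.includeLeftRingHom
      = Algebra.TensorProduct.includeLeftRingHom := by
    apply IsLocalization.ringHom_ext (Submonoid.powers a)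
    ext x
    have h1 : (Algebra.TensorProduct.includeLeftRingHom (R := R) (A := T) (B := A))
        (algebraMap R T x) = algebraMap R (T ⊗[R] A) x :=
      (Algebra.TensorProduct.algebraMap_apply x).symm
    simp only [RingHom.comp_apply, h1, hφalg, hψalg]
  have hψφR : (ψ.comp φ.toRingHom).comp
        (Algebra.TensorProduct.includeRight (R := R) (A := T) (B := A)).toRingHom
      = (Algebra.TensorProduct.includeRight (R := R) (A := T) (B := A)).toRingHom := by
    apply IsLocalization.ringHom_ext (Submonoid.powers b)
    ext x
    have h1 : (Algebra.TensorProduct.includeRight (R := R) (A := T) (B := A)).toRingHom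
        (algebraMap R A x) = algebraMap R (T ⊗[R] A) x :=
      (Algebra.TensorProduct.algebraMap_apply' x).symm
    simp only [RingHom.comp_apply, h1, hφalg, hψalg]
  have hψφ : ∀ z, ψ (φ.toRingHom z) = z := by
    intro z
    induction z using TensorProduct.induction_on with
    | zero => simp
    | tmul x y =>
        have hxy : x ⊗ₜ[R] y =
            (Algebra.TensorProduct.includeLeftRingHom (R := R) (A := T) (B := A) x) *
            ((Algebra.TensorProduct.includeRight (R := R) (A := T) (B := A)).toRingHom y) := by
          simp [Algebra.TensorProduct.tmul_mul_tmul]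
        have e1 := RingHom.congr_fun hψφL x
        have e2 := RingHom.congr_fun hψφR y
        simp only [RingHom.comp_apply] at e1 e2
        rw [hxy, map_mul, map_mul, e1, e2]
    | add x y hx hy => rw [map_add, map_add, hx, hy]
  -- the CommRingCat iso
  have hiso : IsIso (CommRingCat.ofHom φ.toRingHom) := by
    refine ⟨CommRingCat.ofHom ψ, ?_, ?_⟩
    · exact CommRingCat.hom_ext (RingHom.ext hψφ)
    · exact CommRingCat.hom_ext (RingHom.ext fun x => RingHom.congr_fun hφψ x)
  have hL : φ.toRingHom.comp (Algebra.TensorProduct.includeLeftRingHom) =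
      IsLocalization.Away.awayToAwayRight (S := T) (P := B) a b :=
    congrArg AlgHom.toRingHom
      (Algebra.TensorProduct.lift_comp_includeLeft r l (fun _ _ => Commute.all _ _))
  have hR : φ.toRingHom.comp (Algebra.TensorProduct.includeRight).toRingHom =
      IsLocalization.Away.awayToAwayLeft (S := A) (P := B) b a :=
    congrArg AlgHom.toRingHom
      (Algebra.TensorProduct.lift_comp_includeRight r l (fun _ _ => Commute.all _ _))
  have key : Spec.map (CommRingCat.ofHom
        (Algebra.TensorProduct.includeLeftRingHom (R := R) (A := T) (B := A))) ≫ gi =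
      Spec.map (CommRingCat.ofHom
        (Algebra.TensorProduct.includeRight (R := R) (A := T) (B := A)).toRingHom) ≫ gj := by
    have h1 : Spec.map (CommRingCat.ofHom φ.toRingHom) ≫ Spec.map (CommRingCat.ofHom
        (Algebra.TensorProduct.includeLeftRingHom (R := R) (A := T) (B := A))) =
        Spec.map (CommRingCat.ofHom
          (IsLocalization.Away.awayToAwayRight (S := T) (P := B) a b)) := by
      rw [← Spec.map_comp, ← hL]; rfl
    have h2 : Spec.map (CommRingCat.ofHom φ.toRingHom) ≫ Spec.map (CommRingCat.ofHom
        (Algebra.TensorProduct.includeRight (R := R) (A := T) (B := A)).toRingHom) =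
        Spec.map (CommRingCat.ofHom
          (IsLocalization.Away.awayToAwayLeft (S := A) (P := B) b a)) := by
      rw [← Spec.map_comp, ← hR]; rfl
    rw [← h1, ← h2, Category.assoc, Category.assoc] at h
    exact (cancel_epi (Spec.map (CommRingCat.ofHom φ.toRingHom))).mp h
  rw [← pullbackSpecIso_hom_fst R T A, ← pullbackSpecIso_hom_snd R T A,
    Category.assoc, Category.assoc, key]
  rfl

theorem glue_scheme_morphisms_of_span_eq_top (X : Scheme.{u}) {R : Type u} [CommRing R]
    {n : ℕ} (f : Fin n → R) (hf : Ideal.span (Set.range f) = ⊤)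
    (g : ∀ i, Spec (CommRingCat.of (Localization.Away (f i))) ⟶ X)
    (hcompat : ∀ i j,
      Spec.map (CommRingCat.ofHom
        (IsLocalization.Away.awayToAwayRight (S := Localization.Away (f i))
          (P := Localization.Away (f i * f j)) (f i) (f j))) ≫ g i =
      Spec.map (CommRingCat.ofHom
        (IsLocalization.Away.awayToAwayLeft (S := Localization.Away (f j))
          (P := Localization.Away (f i * f j)) (f j) (f i))) ≫ g j) :
    ∃! gg : Spec (CommRingCat.of R) ⟶ X,
      ∀ i, Spec.map (CommRingCat.ofHom
        (algebraMap R (Localization.Away (f i)))) ≫ gg = g i := by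
  have hrange : Set.range (fun i : ULift.{u} (Fin n) => f i.down) = Set.range f := by
    ext x; constructor
    · rintro ⟨i, rfl⟩; exact ⟨i.down, rfl⟩
    · rintro ⟨i, rfl⟩; exact ⟨⟨i⟩, rfl⟩
  let 𝒰 := (Scheme.affineOpenCoverOfSpanRangeEqTop (R := CommRingCat.of R)
    (fun i : ULift.{u} (Fin n) => f i.down) (by rw [hrange]; exact hf)).openCover
  have hc : ∀ i j : ULift.{u} (Fin n),
      Limits.pullback.fst (𝒰.f i) (𝒰.f j) ≫ g i.down =
      Limits.pullback.snd (𝒰.f i) (𝒰.f j) ≫ g j.down := fun i j =>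
    pullback_compat X (f i.down) (f j.down) (g i.down) (g j.down) (hcompat i.down j.down)
  refine ⟨Scheme.Cover.glueMorphisms 𝒰 (fun i => g i.down) hc, fun i => ?_, fun gg' hgg' => ?_⟩
  · exact Scheme.Cover.ι_glueMorphisms 𝒰 (fun i => g i.down) hc ⟨i⟩
  · apply Scheme.Cover.hom_ext 𝒰
    intro i
    rw [show 𝒰.f i ≫ gg' = g i.down from hgg' i.down,
      Scheme.Cover.ι_glueMorphisms 𝒰 (fun i => g i.down) hc i]
end

section
/- Let X and Y be quasi-compact quasi-separated schemes. Then the map sending a morphism of schemes f : X ⟶ Y to the induced natural transformation of functors of points Hom(Spec ·, X) ⟶ Hom(Spec ·, Y) (given by postcomposition with f) is a bijection. In other words, the functor of points functor from quasi-compact quasi-separated schemes to presheaves on commutative rings is fully faithful. -/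
/-!
STATEMENT 11: The functor of points is fully faithful on quasi-compact
quasi-separated schemes: for qcqs schemes `X`, `Y` the map sending `f : X ⟶ Y`
to the induced natural transformation `Hom(Spec ·, X) ⟶ Hom(Spec ·, Y)`
(postcomposition with `f`) is a bijection.
-/

open AlgebraicGeometry CategoryTheory

universe u

/-- The functor of points of a scheme `X`, sending a commutative ring `R` to
the set of scheme morphisms `Spec R ⟶ X`. -/
noncomputable def AlgebraicGeometry.Scheme.functorOfPoints (X : Scheme.{u}) :
    CommRingCat.{u} ⥤ Type u where
  obj R := Spec R ⟶ X
  map φ := TypeCat.ofHom fun g => Spec.map φ ≫ g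
  map_id R := by ext g; simp
  map_comp φ ψ := by ext g; simp [Spec.map_comp]

/-- Naturality applies to any morphism between affine schemes. -/
lemma functorOfPoints_app_comp {X Y : Scheme.{u}} (α : X.functorOfPoints ⟶ Y.functorOfPoints)
    {R S : CommRingCat.{u}} (h : Spec S ⟶ Spec R) (g : Spec R ⟶ X) :
    α.app S (h ≫ g) = h ≫ α.app R g := by
  obtain ⟨φ, rfl⟩ : ∃ φ, Spec.map φ = h := ⟨Spec.preimage h, Spec.map_preimage h⟩
  exact ConcreteCategory.congr_hom (α.naturality φ) g

theorem functorOfPoints_fullyFaithful_of_qcqs (X Y : Scheme.{u})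
    [CompactSpace X] [QuasiSeparatedSpace X] [CompactSpace Y] [QuasiSeparatedSpace Y] :
    Function.Bijective (fun f : X ⟶ Y =>
      ({ app := fun R => TypeCat.ofHom fun g => g ≫ f
         naturality := by intros; ext g; first | exact Category.assoc _ _ _ | exact (Category.assoc _ _ _).symm } :
        X.functorOfPoints ⟶ Y.functorOfPoints)) := by
  constructor
  · intro f g h
    apply X.affineCover.hom_ext
    intro x
    exact ConcreteCategory.congr_hom (NatTrans.congr_app h _) (X.affineCover.f x)
  · intro α
    have hf : ∀ x y, Limits.pullback.fst (X.affineCover.f x) (X.affineCover.f y) ≫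
        α.app _ (X.affineCover.f x) =
        Limits.pullback.snd _ _ ≫ α.app _ (X.affineCover.f y) := by
      intro x y
      apply (Limits.pullback (X.affineCover.f x) (X.affineCover.f y)).affineCover.hom_ext
      intro w
      have h1 := functorOfPoints_app_comp α
        ((Limits.pullback (X.affineCover.f x) (X.affineCover.f y)).affineCover.f w ≫
          Limits.pullback.fst _ _) (X.affineCover.f x)
      have h2 := functorOfPoints_app_comp α
        ((Limits.pullback (X.affineCover.f x) (X.affineCover.f y)).affineCover.f w ≫
          Limits.pullback.snd _ _) (X.affineCover.f y)
      simp only [Category.assoc, Limits.pullback.condition] at h1 h2 ⊢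
      have e : ((Limits.pullback (X.affineCover.f x) (X.affineCover.f y)).affineCover.f w ≫
          Limits.pullback.fst _ _) ≫ X.affineCover.f x =
          ((Limits.pullback (X.affineCover.f x) (X.affineCover.f y)).affineCover.f w ≫
          Limits.pullback.snd _ _) ≫ X.affineCover.f y := by
        simp only [Category.assoc, Limits.pullback.condition]
      exact (Category.assoc _ _ _).symm.trans
        (h1.symm.trans ((congrArg _ e).trans (h2.trans (Category.assoc _ _ _))))
    refine ⟨X.affineCover.glueMorphisms (fun x => α.app _ (X.affineCover.f x)) hf, ?_⟩
    ext R g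
    show g ≫ X.affineCover.glueMorphisms (fun x => α.app _ (X.affineCover.f x)) hf = α.app R g
    apply (X.affineCover.pullback₁ g).hom_ext
    intro x
    simp only [Precoverage.ZeroHypercover.pullback₁_toPreZeroHypercover, PreZeroHypercover.pullback₁_f]
    apply (Limits.pullback g (X.affineCover.f x)).affineCover.hom_ext
    intro w
    have h1 := functorOfPoints_app_comp α
      ((Limits.pullback g (X.affineCover.f x)).affineCover.f w ≫ Limits.pullback.fst _ _) g
    have h2 := functorOfPoints_app_comp α
      ((Limits.pullback g (X.affineCover.f x)).affineCover.f w ≫ Limits.pullback.snd _ _)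
      (X.affineCover.f x)
    change _ ≫ Limits.pullback.fst g (X.affineCover.f x) ≫ _ =
      _ ≫ Limits.pullback.fst g (X.affineCover.f x) ≫ _
    simp only [Category.assoc, Limits.pullback.condition, Limits.pullback.condition_assoc,
      Scheme.Cover.ι_glueMorphisms] at h1 h2 ⊢
    have e : ((Limits.pullback g (X.affineCover.f x)).affineCover.f w ≫
        Limits.pullback.fst _ _) ≫ g =
        ((Limits.pullback g (X.affineCover.f x)).affineCover.f w ≫
        Limits.pullback.snd _ _) ≫ X.affineCover.f x := by
      exact (Category.assoc _ _ _).trans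
        ((whisker_eq _ Limits.pullback.condition).trans (Category.assoc _ _ _).symm)
    have e2 := Scheme.Cover.ι_glueMorphisms X.affineCover
      (fun x => α.app _ (X.affineCover.f x)) hf x
    have e3 := (Category.assoc _ _ _).symm.trans ((eq_whisker e
      (X.affineCover.glueMorphisms (fun x => α.app _ (X.affineCover.f x)) hf)).trans
      ((Category.assoc _ _ _).trans (whisker_eq _ e2)))
    exact e3.trans
      (h2.symm.trans ((congrArg _ e.symm).trans (h1.trans (Category.assoc _ _ _))))
end

section
/- Let R be a commutative ring and let K(R) denote the bounded distributive lattice of quasi-compact open subsets of Spec R (ordered by inclusion, with finite unions and intersections). Then the map D : R → K(R) sending f to the basic open D(f) is a universal support: for every bounded distributive lattice L and every map d : R → L satisfying d(0) = ⊥, d(1) = ⊤, d(xy) = d(x) ⊓ d(y) for all x, y, and d(x+y) ≤ d(x) ⊔ d(y) for all x, y, there is a unique homomorphism of bounded lattices φ : K(R) → L with φ(D(f)) = d(f) for all f : R. -/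
/-!
For a support `d` and any `c : L`, the set `{x | d x ≤ c}` is a radical ideal. Hence if
`V(t) ⊆ V(s)` for finite sets `s, t ⊆ R`, i.e. `⋃_{f ∈ s} D(f) ⊆ ⋃_{f ∈ t} D(f)`, then
`s` lies in the radical of `(t)` and `⨆_{f ∈ s} d f ≤ ⨆_{f ∈ t} d f`. Every quasi-compact open
is such a finite union, so `φ (⋃_{f ∈ s} D(f)) := ⨆_{f ∈ s} d f` is well defined; it preserves
finite joins trivially and meets by distributivity, since `D` and `d` both send products to meets.
-/

open TopologicalSpace

universe u v

/-- The prime spectrum of a commutative ring is quasi-separated. -/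
instance PrimeSpectrum.instQuasiSeparatedSpace' (R : Type u) [CommRing R] :
    QuasiSeparatedSpace (PrimeSpectrum R) :=
  inferInstanceAs (QuasiSeparatedSpace (AlgebraicGeometry.Spec (CommRingCat.of R)))

/-- The compact opens of a quasi-separated space form a lattice. -/
instance CompactOpens.instLattice (α : Type*) [TopologicalSpace α] [QuasiSeparatedSpace α] :
    Lattice (CompactOpens α) :=
  SetLike.coe_injective.lattice _ .rfl .rfl CompactOpens.coe_sup CompactOpens.coe_inf

/-- The basic open `D(f)` as a compact open of `Spec R`; this is the universal
support into the Zariski lattice of `R`. -/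
def primeSpectrumD {R : Type u} [CommRing R] (f : R) :
    CompactOpens (PrimeSpectrum R) :=
  ⟨⟨(PrimeSpectrum.basicOpen f : Set (PrimeSpectrum R)),
      PrimeSpectrum.isCompact_basicOpen f⟩,
    (PrimeSpectrum.basicOpen f).isOpen⟩

open PrimeSpectrum Pointwise

structure IsSupport {R L : Type*} [CommSemiring R] [Lattice L] [BoundedOrder L] (d : R → L) :
    Prop where
  map_zero : d 0 = ⊥
  map_one : d 1 = ⊤
  map_mul (x y : R) : d (x * y) = d x ⊓ d y
  map_add_le (x y : R) : d (x + y) ≤ d x ⊔ d y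

namespace IsSupport

variable {R L : Type*} [CommSemiring R] [Lattice L] [BoundedOrder L] {d : R → L}

lemma map_mul_le_right (hd : IsSupport d) (x y : R) : d (x * y) ≤ d y :=
  (hd.map_mul x y).trans_le inf_le_right

lemma le_map_pow (hd : IsSupport d) (x : R) : ∀ n : ℕ, d x ≤ d (x ^ n)
  | 0 => by rw [pow_zero, hd.map_one]; exact le_top
  | n + 1 => by rw [pow_succ, hd.map_mul]; exact le_inf (hd.le_map_pow x n) le_rfl

def idealIic (hd : IsSupport d) (c : L) : Ideal R where
  carrier := {x | d x ≤ c}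
  zero_mem' := (hd.map_zero).trans_le bot_le
  add_mem' {x y} hx hy := (hd.map_add_le x y).trans (sup_le hx hy)
  smul_mem' a x hx := (hd.map_mul_le_right a x).trans hx

lemma isRadical_idealIic (hd : IsSupport d) (c : L) : (hd.idealIic c).IsRadical :=
  fun _ ⟨n, hn⟩ => (hd.le_map_pow _ n).trans hn

lemma finset_sup_le_finset_sup_of_zeroLocus_subset (hd : IsSupport d) {s t : Finset R}
    (h : zeroLocus (t : Set R) ⊆ zeroLocus s) : s.sup d ≤ t.sup d := by
  have hspan : Ideal.span (t : Set R) ≤ hd.idealIic (t.sup d) :=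
    Ideal.span_le.mpr fun x hx => Finset.le_sup (f := d) hx
  rw [← zeroLocus_span (t : Set R), ← zeroLocus_span (s : Set R),
    zeroLocus_subset_zeroLocus_iff, Ideal.span_le] at h
  exact Finset.sup_le fun x hx =>
    (hd.isRadical_idealIic _).radical_le_iff.mpr hspan (h hx)

end IsSupport

theorem Finset.sup_mul_of_map_mul {M L : Type*} [Mul M] [DecidableEq M] [DistribLattice L]
    [OrderBot L] {e : M → L} (he : ∀ x y, e (x * y) = e x ⊓ e y) (s t : Finset M) :
    (s * t).sup e = s.sup e ⊓ t.sup e := by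
  rw [← Finset.image_mul_product, Finset.sup_image, Finset.sup_inf_sup]
  exact Finset.sup_congr rfl fun p _ => he p.1 p.2

instance CompactOpens.instDistribLattice (α : Type*) [TopologicalSpace α]
    [QuasiSeparatedSpace α] : DistribLattice (CompactOpens α) :=
  { CompactOpens.instLattice α with
    le_sup_inf := fun U V W => (Set.union_inter_distrib_left (U : Set α) V W).ge }

section Extension

variable {M K L : Type*} [DistribLattice K] [BoundedOrder K] [DistribLattice L] [BoundedOrder L]
  {D : M → K} {d : M → L}

variable (d) in
noncomputable def supExtend (hgen : ∀ U : K, ∃ s : Finset M, s.sup D = U) (U : K) : L :=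
  (hgen U).choose.sup d

lemma supExtend_finset_sup (hgen : ∀ U : K, ∃ s : Finset M, s.sup D = U)
    (hmono : ∀ s t : Finset M, s.sup D ≤ t.sup D → s.sup d ≤ t.sup d)
    (s : Finset M) : supExtend d hgen (s.sup D) = s.sup d :=
  le_antisymm (hmono _ _ (hgen _).choose_spec.le) (hmono _ _ (hgen _).choose_spec.ge)

noncomputable def supExtendHom [MulOneClass M] (hgen : ∀ U : K, ∃ s : Finset M, s.sup D = U)
    (hmono : ∀ s t : Finset M, s.sup D ≤ t.sup D → s.sup d ≤ t.sup d)
    (hDmul : ∀ x y, D (x * y) = D x ⊓ D y) (hdmul : ∀ x y, d (x * y) = d x ⊓ d y)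
    (hd1 : d 1 = ⊤) : BoundedLatticeHom K L where
  toFun := supExtend d hgen
  map_sup' U V := by
    classical
    obtain ⟨s, rfl⟩ := hgen U
    obtain ⟨t, rfl⟩ := hgen V
    simp only [← Finset.sup_union, supExtend_finset_sup hgen hmono]
  map_inf' U V := by
    classical
    obtain ⟨s, rfl⟩ := hgen U
    obtain ⟨t, rfl⟩ := hgen V
    simp only [← Finset.sup_mul_of_map_mul hDmul, ← Finset.sup_mul_of_map_mul hdmul,
      supExtend_finset_sup hgen hmono]
  map_top' := by
    obtain ⟨s, hs⟩ := hgen ⊤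
    have h1s : ({1} : Finset M).sup D ≤ s.sup D := hs ▸ le_top
    rw [← hs, supExtend_finset_sup hgen hmono, eq_top_iff, ← hd1]
    simpa using hmono _ _ h1s
  map_bot' := by
    simpa using supExtend_finset_sup hgen hmono ∅

theorem existsUnique_boundedLatticeHom_apply_eq [MulOneClass M]
    (hgen : ∀ U : K, ∃ s : Finset M, s.sup D = U)
    (hmono : ∀ s t : Finset M, s.sup D ≤ t.sup D → s.sup d ≤ t.sup d)
    (hDmul : ∀ x y, D (x * y) = D x ⊓ D y) (hdmul : ∀ x y, d (x * y) = d x ⊓ d y)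
    (hd1 : d 1 = ⊤) : ∃! φ : BoundedLatticeHom K L, ∀ f, φ (D f) = d f := by
  refine ⟨supExtendHom hgen hmono hDmul hdmul hd1, fun f => ?_, fun ψ hψ => ?_⟩
  · change supExtend d hgen (D f) = d f
    simpa using supExtend_finset_sup hgen hmono {f}
  ext U
  obtain ⟨s, rfl⟩ := hgen U
  rw [map_finset_sup]
  exact (Finset.sup_congr rfl fun f _ => hψ f).trans (supExtend_finset_sup hgen hmono s).symm

end Extension

section Zariski

variable {R : Type*} [CommRing R]

lemma primeSpectrumD_mul (x y : R) :
    primeSpectrumD (x * y) = primeSpectrumD x ⊓ primeSpectrumD y :=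
  CompactOpens.ext (by simp [primeSpectrumD, basicOpen_mul])

lemma coe_finset_sup_primeSpectrumD (s : Finset R) :
    ((s.sup primeSpectrumD : CompactOpens (PrimeSpectrum R)) : Set (PrimeSpectrum R)) =
      (zeroLocus s)ᶜ := by
  ext p
  simp [CompactOpens.coe_finsetSup, primeSpectrumD, mem_zeroLocus, Set.not_subset]

lemma exists_finset_sup_primeSpectrumD_eq (U : CompactOpens (PrimeSpectrum R)) :
    ∃ s : Finset R, s.sup primeSpectrumD = U := by
  obtain ⟨s, hs⟩ := isCompact_isOpen_iff.mp ⟨U.isCompact, U.isOpen⟩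
  exact ⟨s, CompactOpens.ext ((coe_finset_sup_primeSpectrumD s).trans hs)⟩

lemma finset_sup_primeSpectrumD_le_iff (s t : Finset R) :
    s.sup primeSpectrumD ≤ t.sup primeSpectrumD ↔ zeroLocus (t : Set R) ⊆ zeroLocus s := by
  rw [← SetLike.coe_subset_coe, coe_finset_sup_primeSpectrumD, coe_finset_sup_primeSpectrumD,
    Set.compl_subset_compl]

end Zariski

theorem zariski_lattice_universal_property {R : Type u} [CommRing R]
    {L : Type v} [DistribLattice L] [BoundedOrder L]
    (d : R → L) (h0 : d 0 = ⊥) (h1 : d 1 = ⊤)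
    (hmul : ∀ x y, d (x * y) = d x ⊓ d y)
    (hadd : ∀ x y, d (x + y) ≤ d x ⊔ d y) :
    ∃! φ : BoundedLatticeHom (CompactOpens (PrimeSpectrum R)) L,
      ∀ f : R, φ (primeSpectrumD f) = d f := by
  have hd : IsSupport d := ⟨h0, h1, hmul, hadd⟩
  exact existsUnique_boundedLatticeHom_apply_eq exists_finset_sup_primeSpectrumD_eq
    (fun s t hst => hd.finset_sup_le_finset_sup_of_zeroLocus_subset
      ((finset_sup_primeSpectrumD_le_iff s t).mp hst))
    primeSpectrumD_mul hmul h1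
end
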